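/- Let W : ℝ³ → ℝ be continuously differentiable and let r : ℝ → ℝ³ be twice differentiable with velocity u := ṙ satisfying |u(t)| < 1 for all t. Suppose the dynamical equation d/dt(−W(r(t))·u(t)) = −∇W(r(t)) holds. Then the function t ↦ W(r(t))²·(1 − |u(t)|²) is constant. In particular, if W(r(t)) < 0 for all t and u(t₀) = 0 at some time t₀, then −W(r(t)) = m₀·(1−|u(t)|²)^{−1/2} for all t, where m₀ := −W(r(t₀)). -/

import Mathlib

variable {ι : Type*} [Fintype ι] [DecidableEq ι]

theorem ContinuousLinearMap.apply_eq_sum_mul_single (L : (ι → ℝ) →L[ℝ] ℝ) (v : ι → ℝ) :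
    L v = ∑ i, v i * L (Pi.single i 1) := by
  conv_lhs => rw [pi_eq_sum_univ' v]
  simp only [map_sum, map_smul, smul_eq_mul]

/-- With `p := -W(r) u` one has `W(r)² (1 - |u|²) = W(r)² - |p|²`, and by the chain rule and the
equation of motion `ṗ = -∇W(r)` both terms have derivative `2 W(r) ⟨u, ∇W(r)⟩`. -/
theorem hasDerivAt_sq_mul_one_sub_sum_sq {W : (ι → ℝ) → ℝ} (hW : Differentiable ℝ W)
    {r u : ℝ → ι → ℝ} {t : ℝ} (hr : HasDerivAt r (u t) t)
    (hp : HasDerivAt (fun t' i => -W (r t') * u t' i)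
      (fun i => -fderiv ℝ W (r t) (Pi.single i 1)) t) :
    HasDerivAt (fun t' => W (r t') ^ 2 * (1 - ∑ i, u t' i ^ 2)) 0 t := by
  set g : ι → ℝ := fun i => fderiv ℝ W (r t) (Pi.single i 1)
  have hw : HasDerivAt (fun t' => W (r t')) (∑ i, u t i * g i) t := by
    rw [← ContinuousLinearMap.apply_eq_sum_mul_single]
    exact (hW (r t)).hasFDerivAt.comp_hasDerivAt t hr
  have hpi : ∀ i, HasDerivAt (fun t' => -W (r t') * u t' i) (-g i) t := hasDerivAt_pi.mp hp
  have hderiv := (hw.pow 2).sub (HasDerivAt.fun_sum (u := Finset.univ) fun i _ => (hpi i).pow 2)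
  have hzero : (2 : ℕ) * W (r t) ^ (2 - 1) * ∑ i, u t i * g i
      - ∑ i, (2 : ℕ) * (-W (r t) * u t i) ^ (2 - 1) * -g i = 0 := by
    rw [Finset.mul_sum, ← Finset.sum_sub_distrib]
    exact Finset.sum_eq_zero fun i _ => by push_cast; ring
  rw [hzero] at hderiv
  refine hderiv.congr_of_eventuallyEq (.of_forall fun t' => ?_)
  simp only [Pi.sub_apply, Pi.pow_apply]
  rw [mul_sub, mul_one, Finset.mul_sum]
  exact congrArg _ (Finset.sum_congr rfl fun i _ => by ring)

theorem neg_eq_neg_div_sqrt_of_sq_mul_eq {a b x : ℝ} (ha : a < 0) (hb : b < 0)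
    (h : a ^ 2 * x = b ^ 2) : -a = -b / √x := by
  have hx : x = (b / a) ^ 2 := by
    rw [div_pow, eq_div_iff (pow_ne_zero 2 ha.ne)]
    linarith
  rw [hx, Real.sqrt_sq (div_nonneg_of_nonpos hb.le ha.le), neg_div, div_div_cancel₀ hb.ne]

theorem vacuum_field_mass_relation_general
    (W : (Fin 3 → ℝ) → ℝ) (hW : ContDiff ℝ 1 W)
    (r u : ℝ → Fin 3 → ℝ)
    (hu : ∀ t, HasDerivAt r (u t) t)
    (hdyn : ∀ t, HasDerivAt (fun t' => fun i => -W (r t') * u t' i)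
        (fun i => -fderiv ℝ W (r t) (Pi.single i 1)) t) :
    (∀ t₁ t₂, W (r t₁) ^ 2 * (1 - ∑ i, u t₁ i ^ 2)
        = W (r t₂) ^ 2 * (1 - ∑ i, u t₂ i ^ 2)) ∧
    ((∀ t, W (r t) < 0) → ∀ t₀, u t₀ = 0 → ∀ t,
        -W (r t) = (-W (r t₀)) / Real.sqrt (1 - ∑ i, u t i ^ 2)) := by
  have hconserved := fun t =>
    hasDerivAt_sq_mul_one_sub_sum_sq (hW.differentiable one_ne_zero) (hu t) (hdyn t)
  have hconst : ∀ t₁ t₂, W (r t₁) ^ 2 * (1 - ∑ i, u t₁ i ^ 2)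
      = W (r t₂) ^ 2 * (1 - ∑ i, u t₂ i ^ 2) :=
    is_const_of_deriv_eq_zero (fun t => (hconserved t).differentiableAt)
      (fun t => (hconserved t).deriv)
  refine ⟨hconst, fun hWneg t₀ hu₀ t => ?_⟩
  refine neg_eq_neg_div_sqrt_of_sq_mul_eq (hWneg t) (hWneg t₀) ?_
  simpa [hu₀] using hconst t t₀

/-- if the dynamics `d/dt(-W(r)u) = -∇W(r)` holds with `u = ṙ` and
`|u| < 1`, then `W(r(t))²(1 - |u(t)|²)` is conserved; in particular, if `W(r(t)) < 0`
and `u(t₀) = 0`, then `-W(r(t)) = m₀ (1-|u(t)|²)^{-1/2}` with `m₀ := -W(r(t₀))`. -/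
theorem vacuum_field_mass_relation
    (W : (Fin 3 → ℝ) → ℝ) (hW : ContDiff ℝ 1 W)
    (r u : ℝ → Fin 3 → ℝ)
    (hu : ∀ t, HasDerivAt r (u t) t)
    (hu1 : ∀ t, Real.sqrt (∑ i, u t i ^ 2) < 1)
    (hdyn : ∀ t, HasDerivAt (fun t' => fun i => -W (r t') * u t' i)
        (fun i => -fderiv ℝ W (r t) (Pi.single i 1)) t) :
    (∀ t₁ t₂, W (r t₁) ^ 2 * (1 - ∑ i, u t₁ i ^ 2)
        = W (r t₂) ^ 2 * (1 - ∑ i, u t₂ i ^ 2)) ∧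
    ((∀ t, W (r t) < 0) → ∀ t₀, u t₀ = 0 → ∀ t,
        -W (r t) = (-W (r t₀)) / Real.sqrt (1 - ∑ i, u t i ^ 2)) :=
  vacuum_field_mass_relation_general W hW r u hu hdyn
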